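/- For every b > 0, Σ_{n=0}^∞ (Kⁿη)(−b) ≤ exp(−2θ*b). (This is the second-moment bound showing that Siegmund's exponentially twisted importance sampling estimator of the level-crossing probability P(max_{n≥0} S_n > b) is strongly efficient in the light-tailed case.) -/
import Mathlib

open MeasureTheory ProbabilityTheory Filter Set
open scoped ENNReal NNReal

noncomputable section

def etaSieg {Ω : Type*} [MeasurableSpace Ω] (μ : Measure Ω) (X : Ω → ℝ) (θ : ℝ)
    (y : ℝ) : ℝ≥0∞ :=
  ∫⁻ ω in {ω | 0 < y + X ω}, ENNReal.ofReal (Real.exp (θ * (y - (y + X ω)))) ∂μ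

def iterSieg {Ω : Type*} [MeasurableSpace Ω] (μ : Measure Ω) (X : Ω → ℝ) (θ : ℝ) :
    ℕ → ℝ → ℝ≥0∞
  | 0 => etaSieg μ X θ
  | n + 1 => fun y =>
      ∫⁻ ω in {ω | y + X ω ≤ 0},
        iterSieg μ X θ n (y + X ω) * ENNReal.ofReal (Real.exp (θ * (y - (y + X ω)))) ∂μ

lemma measurable_iterSieg {Ω : Type*} [MeasurableSpace Ω] (μ : Measure Ω)
    [IsProbabilityMeasure μ] (X : Ω → ℝ) (hX : Measurable X) (θ : ℝ) (n : ℕ) :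
    Measurable (iterSieg μ X θ n) := by
  induction n with
  | zero =>
    have hF : Measurable (fun p : ℝ × Ω =>
        if 0 < p.1 + X p.2 then ENNReal.ofReal (Real.exp (θ * (p.1 - (p.1 + X p.2)))) else 0) :=
      Measurable.ite (measurableSet_lt measurable_const (by fun_prop)) (by fun_prop) (by fun_prop)
    have key := hF.lintegral_prod_right' (ν := μ)
    have : (iterSieg μ X θ 0) = fun y => ∫⁻ ω, (fun p : ℝ × Ω =>
        if 0 < p.1 + X p.2 then ENNReal.ofReal (Real.exp (θ * (p.1 - (p.1 + X p.2)))) else 0)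
        (y, ω) ∂μ := by
      funext y
      show etaSieg μ X θ y = _
      rw [etaSieg, ← lintegral_indicator (measurableSet_lt measurable_const (by fun_prop))]
      exact lintegral_congr fun ω => by simp [Set.indicator_apply, Set.mem_setOf_eq]
    rw [this]; exact key
  | succ n ih =>
    have hF : Measurable (fun p : ℝ × Ω =>
        if p.1 + X p.2 ≤ 0 then iterSieg μ X θ n (p.1 + X p.2) *
          ENNReal.ofReal (Real.exp (θ * (p.1 - (p.1 + X p.2)))) else 0) :=
      Measurable.ite (measurableSet_le (by fun_prop) measurable_const)
        ((ih.comp (by fun_prop)).mul (by fun_prop)) (by fun_prop)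
    have key := hF.lintegral_prod_right' (ν := μ)
    have : (iterSieg μ X θ (n + 1)) = fun y => ∫⁻ ω, (fun p : ℝ × Ω =>
        if p.1 + X p.2 ≤ 0 then iterSieg μ X θ n (p.1 + X p.2) *
          ENNReal.ofReal (Real.exp (θ * (p.1 - (p.1 + X p.2)))) else 0) (y, ω) ∂μ := by
      funext y
      show (∫⁻ ω in {ω | y + X ω ≤ 0}, iterSieg μ X θ n (y + X ω) *
        ENNReal.ofReal (Real.exp (θ * (y - (y + X ω)))) ∂μ) = _
      rw [← lintegral_indicator (measurableSet_le (by fun_prop) measurable_const)]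
      exact lintegral_congr fun ω => by simp [Set.indicator_apply, Set.mem_setOf_eq]
    rw [this]; exact key

/-- second-moment bound for Siegmund's algorithm in the light-tailed case:
for every `b > 0`, `Σ_{n≥0} (Kⁿη)(−b) ≤ exp(−2θ*b)`. -/
theorem statement8 {Ω : Type*} [MeasurableSpace Ω] (μ : Measure Ω)
    [IsProbabilityMeasure μ] (X : Ω → ℝ) (hX : Measurable X)
    (hint : Integrable X μ) (hneg : ∫ ω, X ω ∂μ < 0)
    (θ : ℝ) (hθ : 0 < θ)
    (hexpint : Integrable (fun ω => Real.exp (θ * X ω)) μ)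
    (hroot : ∫ ω, Real.exp (θ * X ω) ∂μ = 1) :
    ∀ b : ℝ, 0 < b →
      (∑' n : ℕ, iterSieg μ X θ n (-b)) ≤ ENNReal.ofReal (Real.exp (-2 * θ * b)) := by
  have hone : ∫⁻ ω, ENNReal.ofReal (Real.exp (θ * X ω)) ∂μ = 1 := by
    rw [← MeasureTheory.ofReal_integral_eq_lintegral_ofReal hexpint
      (Filter.Eventually.of_forall fun ω => (Real.exp_pos _).le), hroot, ENNReal.ofReal_one]
  have heta : ∀ y : ℝ, etaSieg μ X θ y ≤ ENNReal.ofReal (Real.exp (2 * θ * y)) *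
      ∫⁻ ω in {ω | 0 < y + X ω}, ENNReal.ofReal (Real.exp (θ * X ω)) ∂μ := by
    intro y
    rw [← lintegral_const_mul _ (by fun_prop)]
    apply setLIntegral_mono (by fun_prop)
    intro ω hω
    simp only [Set.mem_setOf_eq] at hω
    rw [← ENNReal.ofReal_mul (Real.exp_pos _).le, ← Real.exp_add]
    apply ENNReal.ofReal_le_ofReal
    apply Real.exp_le_exp.mpr
    nlinarith
  have hsum : ∀ N : ℕ, ∀ y : ℝ,
      ∑ n ∈ Finset.range (N + 1), iterSieg μ X θ n y ≤
        ENNReal.ofReal (Real.exp (2 * θ * y)) := by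
    intro N
    induction N with
    | zero =>
      intro y
      simp only [zero_add, Finset.sum_range_one]
      calc iterSieg μ X θ 0 y
          ≤ ENNReal.ofReal (Real.exp (2 * θ * y)) *
            ∫⁻ ω in {ω | 0 < y + X ω}, ENNReal.ofReal (Real.exp (θ * X ω)) ∂μ := heta y
        _ ≤ ENNReal.ofReal (Real.exp (2 * θ * y)) *
            ∫⁻ ω, ENNReal.ofReal (Real.exp (θ * X ω)) ∂μ :=
          mul_le_mul_right (setLIntegral_le_lintegral _ _) _
        _ = ENNReal.ofReal (Real.exp (2 * θ * y)) := by rw [hone, mul_one]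
    | succ N ih =>
      intro y
      rw [Finset.sum_range_succ']
      have hA : MeasurableSet {ω | y + X ω ≤ 0} :=
        measurableSet_le (by fun_prop) measurable_const
      have hswap : ∑ i ∈ Finset.range (N + 1), iterSieg μ X θ (i + 1) y =
          ∫⁻ ω in {ω | y + X ω ≤ 0},
            (∑ i ∈ Finset.range (N + 1), iterSieg μ X θ i (y + X ω)) *
              ENNReal.ofReal (Real.exp (θ * (y - (y + X ω)))) ∂μ := by
        calc ∑ i ∈ Finset.range (N + 1), iterSieg μ X θ (i + 1) y
            = ∑ i ∈ Finset.range (N + 1), ∫⁻ ω in {ω | y + X ω ≤ 0},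
                iterSieg μ X θ i (y + X ω) *
                  ENNReal.ofReal (Real.exp (θ * (y - (y + X ω)))) ∂μ := by
              simp only [iterSieg]
          _ = ∫⁻ ω in {ω | y + X ω ≤ 0}, ∑ i ∈ Finset.range (N + 1),
                iterSieg μ X θ i (y + X ω) *
                  ENNReal.ofReal (Real.exp (θ * (y - (y + X ω)))) ∂μ :=
              (lintegral_finset_sum' _ fun i _ =>
                (((measurable_iterSieg μ X hX θ i).comp (by fun_prop)).mul
                  (by fun_prop)).aemeasurable).symm
          _ = ∫⁻ ω in {ω | y + X ω ≤ 0},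
                (∑ i ∈ Finset.range (N + 1), iterSieg μ X θ i (y + X ω)) *
                  ENNReal.ofReal (Real.exp (θ * (y - (y + X ω)))) ∂μ :=
              lintegral_congr fun ω => (Finset.sum_mul _ _ _).symm
      have hkey : ∀ ω : Ω, ENNReal.ofReal (Real.exp (2 * θ * (y + X ω))) *
          ENNReal.ofReal (Real.exp (θ * (y - (y + X ω)))) =
          ENNReal.ofReal (Real.exp (2 * θ * y)) * ENNReal.ofReal (Real.exp (θ * X ω)) := by
        intro ω
        rw [← ENNReal.ofReal_mul (Real.exp_pos _).le, ← Real.exp_add,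
          ← ENNReal.ofReal_mul (Real.exp_pos _).le, ← Real.exp_add]
        congr 1
        ring
      have hstep : ∑ i ∈ Finset.range (N + 1), iterSieg μ X θ (i + 1) y ≤
          ENNReal.ofReal (Real.exp (2 * θ * y)) *
            ∫⁻ ω in {ω | y + X ω ≤ 0}, ENNReal.ofReal (Real.exp (θ * X ω)) ∂μ := by
        rw [hswap, ← lintegral_const_mul _ (by fun_prop)]
        apply setLIntegral_mono (by fun_prop)
        intro ω hω
        calc (∑ i ∈ Finset.range (N + 1), iterSieg μ X θ i (y + X ω)) *
              ENNReal.ofReal (Real.exp (θ * (y - (y + X ω))))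
            ≤ ENNReal.ofReal (Real.exp (2 * θ * (y + X ω))) *
              ENNReal.ofReal (Real.exp (θ * (y - (y + X ω)))) :=
            mul_le_mul_left (ih (y + X ω)) _
          _ = ENNReal.ofReal (Real.exp (2 * θ * y)) * ENNReal.ofReal (Real.exp (θ * X ω)) :=
            hkey ω
      have hcompl : {ω | 0 < y + X ω} = {ω | y + X ω ≤ 0}ᶜ := by
        ext ω; simp [not_le]
      calc (∑ i ∈ Finset.range (N + 1), iterSieg μ X θ (i + 1) y) + iterSieg μ X θ 0 y
          ≤ (ENNReal.ofReal (Real.exp (2 * θ * y)) *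
              ∫⁻ ω in {ω | y + X ω ≤ 0}, ENNReal.ofReal (Real.exp (θ * X ω)) ∂μ) +
            ENNReal.ofReal (Real.exp (2 * θ * y)) *
              ∫⁻ ω in {ω | 0 < y + X ω}, ENNReal.ofReal (Real.exp (θ * X ω)) ∂μ :=
          add_le_add hstep (heta y)
        _ = ENNReal.ofReal (Real.exp (2 * θ * y)) := by
            rw [← mul_add, hcompl, lintegral_add_compl _ hA, hone, mul_one]
  intro b hb
  have h2 : (-2 : ℝ) * θ * b = 2 * θ * (-b) := by ring
  rw [h2, ENNReal.tsum_eq_iSup_sum]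
  apply iSup_le
  intro s
  calc ∑ n ∈ s, iterSieg μ X θ n (-b)
      ≤ ∑ n ∈ Finset.range (s.sup id + 1), iterSieg μ X θ n (-b) := by
        apply Finset.sum_le_sum_of_subset
        intro n hn
        simp only [Finset.mem_range]
        exact Nat.lt_succ_of_le (Finset.le_sup (f := id) hn)
    _ ≤ ENNReal.ofReal (Real.exp (2 * θ * (-b))) := hsum _ _
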